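/- arXiv:1709.00038 — 2 statements merged into one kernel-verified Lean document; each statement's English description precedes it below -/
import Mathlib

section
/- In the one-dimensional frog model on $\mathbb{Z}$ where each frog performs a random walk stepping $+1$ with probability $\frac{1+\alpha}{2}$ and $-1$ with probability $\frac{1-\alpha}{2}$ for some $\alpha > 0$, with one sleeping frog at each nonzero site and one active frog at $0$, there exists $c > 0$ such that the probability that site $-n$ is ever visited by an active frog is at most $e^{-cn}$ for all $n \in \mathbb{N}$. -/
/-!
A frog started at `x` is a random walk with drift to the right, so by first-step analysis it
ever reaches `x - m` with probability at most `p ^ m`, where `p = (1 - α) / (1 + α)`.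

Explore the frogs by record levels. At a record `l`, the frogs started in `[l, ∞)` that have
not been looked at yet form a block `B`, independent of everything examined so far. Either no
frog of `B` goes below `l` (probability at least `C(p) > 0`, uniformly in `B`, by independence
and `∏ (1 - p ^ j) > 0`), and then no site below `l` is ever visited; or their lowest point is a
new record `l - v`, which happens with probability at most `p ^ v / (1 - p)`, and the frogs in
`[l - v, l)` form the next fresh block. The probability to reach `l - k` is therefore dominated
by a defective renewal sequence whose jump law has an exponential tail, and it is at most
`A * s ^ (-k)` for some `s > 1`. Together with the bound `1 - C(p)` for small `k` this gives
`exp (-c n)`.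
-/

open MeasureTheory ProbabilityTheory Set

section Independence

variable {Ω ι β : Type*} [mβ : MeasurableSpace β]

lemma measurable_biSup_comap {f : ι → Ω → β} {I : Set ι} {j : ι} (hj : j ∈ I) :
    Measurable[⨆ i ∈ I, mβ.comap (f i)] (f j) :=
  measurable_iff_comap_le.2 (le_iSup₂ (f := fun i _ => mβ.comap (f i)) j hj)

variable [MeasurableSpace Ω] {μ : Measure Ω}

lemma ProbabilityTheory.iIndepFun.indep_biSup_comap {f : ι → Ω → β}
    (hf : ∀ i, Measurable (f i)) (h : iIndepFun f μ) {I J : Set ι} (hIJ : Disjoint I J) :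
    Indep (⨆ i ∈ I, mβ.comap (f i)) (⨆ i ∈ J, mβ.comap (f i)) μ :=
  indep_iSup_of_disjoint (fun i => (hf i).comap_le) ((iIndepFun_iff_iIndep _ _ _).1 h) hIJ

lemma ProbabilityTheory.Indep.measureReal_inter_eq_mul {m₁ m₂ : MeasurableSpace Ω}
    (h : Indep m₁ m₂ μ) {s t : Set Ω} (hs : MeasurableSet[m₁] s) (ht : MeasurableSet[m₂] t) :
    μ.real (s ∩ t) = μ.real s * μ.real t := by
  simp only [measureReal_def, (h.indepSet_of_measurableSet hs ht).measure_inter_eq_mul,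
    ENNReal.toReal_mul]

lemma measureReal_biUnion_le_of_forall_finset [IsFiniteMeasure μ] [Countable ι] {B : Set ι}
    {s : ι → Set Ω} {c : ℝ} (h : ∀ F : Finset ι, ↑F ⊆ B → μ.real (⋃ x ∈ F, s x) ≤ c) :
    μ.real (⋃ x ∈ B, s x) ≤ c := by
  classical
  have hc : 0 ≤ c := measureReal_nonneg.trans (h ∅ (by simp))
  have hunion : ⋃ x ∈ B, s x = ⋃ F ∈ {F : Finset ι | ↑F ⊆ B}, ⋃ x ∈ F, s x := by
    ext ω
    simp only [mem_iUnion, mem_ofPred_eq, exists_prop]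
    exact ⟨fun ⟨x, hx, hω⟩ => ⟨{x}, by simpa using hx, x, by simp, hω⟩,
      fun ⟨F, hF, x, hx, hω⟩ => ⟨x, hF hx, hω⟩⟩
  have hdir : DirectedOn (Function.onFun (· ⊆ ·) fun F : Finset ι => ⋃ x ∈ F, s x)
      {F : Finset ι | ↑F ⊆ B} := fun F hF G hG =>
    ⟨F ∪ G, by simpa using ⟨hF, hG⟩, biUnion_subset_biUnion_left (by simp),
      biUnion_subset_biUnion_left (by simp)⟩
  rw [hunion, measureReal_def, measure_biUnion_eq_iSup (to_countable _) hdir]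
  refine ENNReal.toReal_le_of_le_ofReal hc (iSup₂_le fun F hF => ?_)
  exact (ENNReal.le_ofReal_iff_toReal_le (measure_ne_top _ _) hc).2 (h F hF)

end Independence

section RandomWalk

variable {Ω : Type*}

def descendsBy (X : ℕ → Ω → ℤ) (m N : ℕ) : Set Ω :=
  {ω | ∃ t < N, ∑ i ∈ Finset.range t, X i ω ≤ -m}

lemma measurableSet_descendsBy {mΩ : MeasurableSpace Ω} {X : ℕ → Ω → ℤ}
    (hX : ∀ i, Measurable[mΩ] (X i)) (m N : ℕ) : MeasurableSet[mΩ] (descendsBy X m N) := by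
  have h : descendsBy X m N = ⋃ t < N, (fun ω => ∑ i ∈ Finset.range t, X i ω) ⁻¹' Iic (-m) := by
    ext ω; simp [descendsBy]
  rw [h]
  exact .iUnion fun t => .iUnion fun _ =>
    Finset.measurable_sum _ (fun i _ => hX i) measurableSet_Iic

lemma descendsBy_succ_subset (X : ℕ → Ω → ℤ) (m N : ℕ) :
    descendsBy X (m + 1) (N + 1) ⊆
      ({ω | X 0 ω = 1} ∩ descendsBy (fun i => X (i + 1)) (m + 2) N) ∪
        ({ω | X 0 ω = -1} ∩ descendsBy (fun i => X (i + 1)) m N) ∪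
          ({ω | X 0 ω = 1} ∪ {ω | X 0 ω = -1})ᶜ := by
  rintro ω ⟨_ | t, ht, hsum⟩
  · simp at hsum; omega
  rw [Finset.sum_range_succ'] at hsum
  by_cases h1 : X 0 ω = 1
  · exact Or.inl (Or.inl ⟨h1, t, by omega, by push_cast at hsum ⊢; omega⟩)
  by_cases h2 : X 0 ω = -1
  · exact Or.inl (Or.inr ⟨h2, t, by omega, by push_cast at hsum ⊢; omega⟩)
  exact Or.inr (by simp [h1, h2])

variable [MeasurableSpace Ω] {μ : Measure Ω} [IsProbabilityMeasure μ]

lemma measureReal_compl_eq_one_union_eq_neg_one_eq_zero {Y : Ω → ℤ} (hY : Measurable Y)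
    (h : μ.real {ω | Y ω = 1} + μ.real {ω | Y ω = -1} = 1) :
    μ.real ({ω | Y ω = 1} ∪ {ω | Y ω = -1})ᶜ = 0 := by
  have hmeas (v : ℤ) : MeasurableSet {ω | Y ω = v} := hY (measurableSet_singleton v)
  have hdisj : Disjoint {ω | Y ω = 1} {ω | Y ω = -1} :=
    disjoint_left.2 fun ω h1 h2 => by simp only [mem_ofPred_eq] at h1 h2; omega
  rw [probReal_compl_eq_one_sub ((hmeas 1).union (hmeas (-1))),
    measureReal_union hdisj (hmeas (-1)), h, sub_self]

variable {a b : ℝ}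

theorem measureReal_descendsBy_le (ha : 0 < a) (hab : a + b = 1) (X : ℕ → Ω → ℤ)
    (hX : ∀ i, Measurable (X i)) (hind : iIndepFun X μ)
    (hup : ∀ i, μ.real {ω | X i ω = 1} = a) (hdown : ∀ i, μ.real {ω | X i ω = -1} = b)
    (m N : ℕ) : μ.real (descendsBy X m N) ≤ (b / a) ^ m := by
  induction N generalizing X m with
  | zero => simp [descendsBy, div_nonneg (hdown 0 ▸ measureReal_nonneg) ha.le]
  | succ N ih =>
  have hb : 0 ≤ b := hdown 0 ▸ measureReal_nonneg
  cases m with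
  | zero => simp
  | succ m =>
  let Y := fun i => X (i + 1)
  have hindep := hind.indep_biSup_comap hX (I := {0}) (J := Ioi 0) (by simp)
  have hfirst (v : ℤ) : MeasurableSet[⨆ i ∈ ({0} : Set ℕ), MeasurableSpace.comap (X i) _]
      {ω | X 0 ω = v} :=
    measurable_biSup_comap (mem_singleton 0) (measurableSet_singleton v)
  have hrest (m' : ℕ) : MeasurableSet[⨆ i ∈ Ioi 0, MeasurableSpace.comap (X i) _]
      (descendsBy Y m' N) :=
    measurableSet_descendsBy (fun i => measurable_biSup_comap (Nat.succ_pos i)) m' N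
  have hnull := measureReal_compl_eq_one_union_eq_neg_one_eq_zero (hX 0) (by rw [hup, hdown, hab])
  have ihY (m' : ℕ) := ih Y (fun i => hX _) (hind.precomp Nat.succ_injective)
    (fun i => hup _) (fun i => hdown _) m'
  calc _ ≤ μ.real ({ω | X 0 ω = 1} ∩ descendsBy Y (m + 2) N) +
        μ.real ({ω | X 0 ω = -1} ∩ descendsBy Y m N) +
          μ.real ({ω | X 0 ω = 1} ∪ {ω | X 0 ω = -1})ᶜ :=
        (measureReal_mono (descendsBy_succ_subset X m N)).trans
          ((measureReal_union_le _ _).trans (add_le_add (measureReal_union_le _ _) le_rfl))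
    _ = a * μ.real (descendsBy Y (m + 2) N) + b * μ.real (descendsBy Y m N) := by
        rw [hindep.measureReal_inter_eq_mul (hfirst 1) (hrest _),
          hindep.measureReal_inter_eq_mul (hfirst (-1)) (hrest _), hnull, hup, hdown, add_zero]
    _ ≤ a * (b / a) ^ (m + 2) + b * (b / a) ^ m := by gcongr <;> apply ihY
    _ = (b / a) ^ (m + 1) := by
        -- `b / a` is the root of `a q ^ 2 - q + b = 0` other than `1`
        have hq : a * (b / a) = b := mul_div_cancel₀ b ha.ne'
        linear_combination (b / a) ^ (m + 1) * hab + (b / a) ^ m * (b / a - 1) * hq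

theorem measureReal_exists_sum_le_neg_le (ha : 0 < a) (hab : a + b = 1) (X : ℕ → Ω → ℤ)
    (hX : ∀ i, Measurable (X i)) (hind : iIndepFun X μ)
    (hup : ∀ i, μ.real {ω | X i ω = 1} = a) (hdown : ∀ i, μ.real {ω | X i ω = -1} = b)
    (m : ℕ) : μ.real {ω | ∃ t, ∑ i ∈ Finset.range t, X i ω ≤ -m} ≤ (b / a) ^ m := by
  have hunion : {ω | ∃ t, ∑ i ∈ Finset.range t, X i ω ≤ -m} =
      ⋃ t ∈ (univ : Set ℕ), {ω | ∑ i ∈ Finset.range t, X i ω ≤ -m} := by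
    ext ω; simp
  rw [hunion]
  refine measureReal_biUnion_le_of_forall_finset fun F _ => (measureReal_mono ?_).trans
    (measureReal_descendsBy_le ha hab X hX hind hup hdown m (F.sup id + 1))
  simp only [iUnion_subset_iff]
  exact fun t ht ω hω => ⟨t, Nat.lt_succ_of_le (Finset.le_sup (f := id) ht), hω⟩

end RandomWalk

lemma exists_pos_forall_le_exp_neg_mul {a : ℕ → ℝ} {A β s : ℝ} (hβ : β < 1) (hs : 1 < s)
    (hβa : ∀ n, 1 ≤ n → a n ≤ β) (hAa : ∀ n, 1 ≤ n → a n * s ^ n ≤ A) :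
    ∃ c > 0, ∀ n, 1 ≤ n → a n ≤ Real.exp (-c * n) := by
  have hσ : 0 < Real.log s := Real.log_pos hs
  obtain ⟨N, hN⟩ := exists_nat_ge (A / Real.log s)
  set c := min (Real.log s / 2) ((1 - β) / (2 * N + 1))
  refine ⟨c, lt_min (by positivity) (div_pos (by linarith) (by positivity)), fun n hn => ?_⟩
  rcases le_or_gt n (2 * N) with hnN | hnN
  · have hcn : c * n ≤ 1 - β :=
      calc c * n ≤ (1 - β) / (2 * N + 1) * (2 * N + 1) :=
            mul_le_mul (min_le_right _ _) (by exact_mod_cast hnN.trans (Nat.le_succ _))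
              (by positivity) (div_nonneg (by linarith) (by positivity))
        _ = 1 - β := by field_simp
    calc a n ≤ β := hβa n hn
      _ ≤ Real.exp (-(1 - β)) := by linarith [Real.add_one_le_exp (-(1 - β))]
      _ ≤ Real.exp (-c * n) := Real.exp_le_exp.2 (by linarith)
  · have hsn : s ^ n = Real.exp (Real.log s * n) := by
      rw [mul_comm, Real.exp_nat_mul, Real.exp_log (by linarith)]
    have hA : A ≤ Real.exp (Real.log s * N) := by
      have := Real.add_one_le_exp (Real.log s * N)
      rw [div_le_iff₀ hσ] at hN
      linarith
    have hnN' : (2 * N : ℝ) < n := by exact_mod_cast hnN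
    calc a n ≤ A / s ^ n := by rw [le_div_iff₀ (by positivity)]; exact hAa n hn
      _ ≤ Real.exp (Real.log s * N) / Real.exp (Real.log s * n) := by rw [hsn]; gcongr
      _ = Real.exp (-(Real.log s * (n - N))) := by rw [← Real.exp_sub]; ring_nf
      _ ≤ Real.exp (-c * n) := by
          refine Real.exp_le_exp.2 ?_
          have : c ≤ Real.log s / 2 := min_le_left _ _
          nlinarith

section RealBounds

open Real

variable {p : ℝ}

lemma exp_neg_div_one_sub_le_one_sub (hp1 : p < 1) {u : ℝ} (hu0 : 0 ≤ u) (hup : u ≤ p) :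
    exp (-(u / (1 - p))) ≤ 1 - u := by
  have hu1 : 0 < 1 - u := by linarith
  have hq : 0 < 1 - p := by linarith
  calc exp (-(u / (1 - p))) ≤ exp (1 - (1 - u)⁻¹) := by
        refine exp_le_exp.2 ?_
        have : 1 - (1 - u)⁻¹ = -(u / (1 - u)) := by field_simp; ring
        rw [this, neg_le_neg_iff]
        exact div_le_div_of_nonneg_left hu0 hq (by linarith)
    _ ≤ exp (log (1 - u)) := exp_le_exp.2 (one_sub_inv_le_log_of_pos hu1)
    _ = 1 - u := exp_log hu1

lemma sum_pow_toNat_sub_le (hp0 : 0 ≤ p) (hp1 : p < 1) {l : ℤ} {F : Finset ℤ}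
    (hF : ↑F ⊆ Ici l) : ∑ x ∈ F, p ^ (x - l).toNat ≤ (1 - p)⁻¹ := by
  have hinj : InjOn (fun x => (x - l).toNat) F := fun x hx y hy hxy => by
    have := hF hx; have := hF hy; simp only [mem_Ici] at *; omega
  rw [← Finset.sum_image hinj, ← tsum_geometric_of_lt_one hp0 hp1]
  exact Summable.sum_le_tsum _ (fun n _ => pow_nonneg hp0 n)
    (summable_geometric_of_lt_one hp0 hp1)

end RealBounds

namespace FrogModel

variable {Ω : Type*} {S : ℤ → ℕ → Ω → ℤ}

def increment (S : ℤ → ℕ → Ω → ℤ) (i : ℤ × ℕ) (ω : Ω) : ℤ := S i.1 (i.2 + 1) ω - S i.1 i.2 ω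

structure IndepFrogs [MeasurableSpace Ω] (μ : Measure Ω) (S : ℤ → ℕ → Ω → ℤ) : Prop where
  measurable : ∀ x n, Measurable (S x n)
  start : ∀ x ω, S x 0 ω = x
  iIndepFun_increment : iIndepFun (increment S) μ

abbrev frogsSigma (S : ℤ → ℕ → Ω → ℤ) (B : Set ℤ) : MeasurableSpace Ω :=
  ⨆ i ∈ Prod.fst ⁻¹' B, MeasurableSpace.comap (increment S i) inferInstance

def reachesLE (S : ℤ → ℕ → Ω → ℤ) (x c : ℤ) : Set Ω := {ω | ∃ k, S x k ω ≤ c}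

def blockReachesLE (S : ℤ → ℕ → Ω → ℤ) (B : Set ℤ) (c : ℤ) : Set Ω := ⋃ x ∈ B, reachesLE S x c

def blockMinEq (S : ℤ → ℕ → Ω → ℤ) (B : Set ℤ) (c : ℤ) : Set Ω :=
  blockReachesLE S B c \ blockReachesLE S B (c - 1)

/-- Starting from the record level `l` with the unexplored block `B ⊆ [l, ∞)`, the level `l - k`
is reached either directly by a frog of `B`, or after the lowest point `l - v` of `B` has become
the new record, from which the block `[l - v, l)` carries on. -/
def cascade (S : ℤ → ℕ → Ω → ℤ) (k : ℕ) (l : ℤ) (B : Set ℤ) : Set Ω :=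
  blockReachesLE S B (l - k) ∪
    ⋃ v ∈ Finset.Ico 1 k, blockMinEq S B (l - v) ∩ cascade S (k - v) (l - v) (Ico (l - v) l)
termination_by k
decreasing_by simp_all only [Finset.mem_Ico]; omega

lemma cascade_eq (k : ℕ) (l : ℤ) (B : Set ℤ) :
    cascade S k l B = blockReachesLE S B (l - k) ∪
      ⋃ v ∈ Finset.Ico 1 k,
        blockMinEq S B (l - v) ∩ cascade S (k - v) (l - v) (Ico (l - v) l) := by
  rw [cascade]

lemma reachesLE_mono {x c c' : ℤ} (h : c ≤ c') : reachesLE S x c ⊆ reachesLE S x c' :=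
  fun _ ⟨k, hk⟩ => ⟨k, hk.trans h⟩

lemma blockReachesLE_mono {B : Set ℤ} {c c' : ℤ} (h : c ≤ c') :
    blockReachesLE S B c ⊆ blockReachesLE S B c' :=
  biUnion_mono subset_rfl fun _ _ => reachesLE_mono h

lemma disjoint_blockMinEq_of_lt {B : Set ℤ} {c c' : ℤ} (h : c < c') :
    Disjoint (blockMinEq S B c) (blockMinEq S B c') :=
  disjoint_left.2 fun _ hc hc' => hc'.2 (blockReachesLE_mono (by omega) hc.1)

lemma cascade_subset_blockReachesLE {k : ℕ} (hk : 1 ≤ k) (l : ℤ) (B : Set ℤ) :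
    cascade S k l B ⊆ blockReachesLE S B (l - 1) := by
  rw [cascade_eq]
  refine union_subset (blockReachesLE_mono (by omega)) (iUnion₂_subset fun v hv => ?_)
  simp only [Finset.mem_Ico] at hv
  exact inter_subset_left.trans (sdiff_subset.trans (blockReachesLE_mono (by omega)))

section Measurability

lemma frogsSigma_mono {A B : Set ℤ} (h : A ⊆ B) : frogsSigma S A ≤ frogsSigma S B :=
  biSup_mono fun _ hi => h hi

lemma eq_add_sum_increment (hstart : ∀ x ω, S x 0 ω = x) (x : ℤ) (k : ℕ) (ω : Ω) :
    S x k ω = x + ∑ i ∈ Finset.range k, increment S (x, i) ω := by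
  simp only [increment, Finset.sum_range_sub (fun i => S x i ω), hstart]
  ring

lemma measurable_frogsSigma (hstart : ∀ x ω, S x 0 ω = x) {B : Set ℤ} {x : ℤ} (hx : x ∈ B)
    (k : ℕ) : Measurable[frogsSigma S B] (S x k) := by
  rw [funext (eq_add_sum_increment hstart x k)]
  exact measurable_const.add
    (Finset.measurable_sum _ fun i _ => measurable_biSup_comap (show (x, i).1 ∈ B from hx))

lemma measurableSet_reachesLE (hstart : ∀ x ω, S x 0 ω = x) {B : Set ℤ} {x : ℤ} (hx : x ∈ B)
    (c : ℤ) : MeasurableSet[frogsSigma S B] (reachesLE S x c) := by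
  have h : reachesLE S x c = ⋃ k, S x k ⁻¹' Iic c := by ext; simp [reachesLE]
  rw [h]
  exact .iUnion fun k => measurable_frogsSigma hstart hx k measurableSet_Iic

lemma measurableSet_blockReachesLE (hstart : ∀ x ω, S x 0 ω = x) (B : Set ℤ) (c : ℤ) :
    MeasurableSet[frogsSigma S B] (blockReachesLE S B c) :=
  .biUnion B.to_countable fun _ hx => measurableSet_reachesLE hstart hx c

lemma measurableSet_blockMinEq (hstart : ∀ x ω, S x 0 ω = x) (B : Set ℤ) (c : ℤ) :
    MeasurableSet[frogsSigma S B] (blockMinEq S B c) :=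
  (measurableSet_blockReachesLE hstart B c).diff (measurableSet_blockReachesLE hstart B _)

lemma measurableSet_cascade (hstart : ∀ x ω, S x 0 ω = x) (k : ℕ) (l : ℤ) (B : Set ℤ) :
    MeasurableSet[frogsSigma S (B ∪ Iio l)] (cascade S k l B) := by
  induction k using Nat.strong_induction_on generalizing l B with
  | _ k ih =>
  rw [cascade_eq]
  refine .union (frogsSigma_mono subset_union_left _ (measurableSet_blockReachesLE hstart _ _))
    (.biUnion (to_countable _) fun v hv => .inter ?_ ?_)
  · exact frogsSigma_mono subset_union_left _ (measurableSet_blockMinEq hstart _ _)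
  · simp only [Finset.mem_coe, Finset.mem_Ico] at hv
    refine frogsSigma_mono ?_ _ (ih (k - v) (by omega) _ _)
    rintro x (hx | hx)
    · exact Or.inr hx.2
    · exact Or.inr (by simp only [mem_Iio] at hx ⊢; omega)

variable [MeasurableSpace Ω] {μ : Measure Ω}

lemma frogsSigma_le (hS : ∀ x n, Measurable (S x n)) (B : Set ℤ) :
    frogsSigma S B ≤ ‹MeasurableSpace Ω› :=
  iSup₂_le fun i _ => ((hS i.1 (i.2 + 1)).sub (hS i.1 i.2)).comap_le

lemma IndepFrogs.indep_frogsSigma (hS : IndepFrogs μ S) {A B : Set ℤ} (h : Disjoint A B) :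
    Indep (frogsSigma S A) (frogsSigma S B) μ :=
  (hS.iIndepFun_increment.indep_biSup_comap
    (fun i => (hS.measurable i.1 (i.2 + 1)).sub (hS.measurable i.1 i.2)) (h.preimage Prod.fst) :)

end Measurability

section Constants

open Real

variable {p : ℝ}

noncomputable def survivalBound (p : ℝ) : ℝ := exp (-(p / (1 - p) ^ 2))

/-- With `s = decayBase p` and `A = decayConst p`, the induction in
`measureReal_cascade_mul_pow_le` needs `s * p ≤ 1`, `∑ p ^ v * (s ^ v - 1) ≤ (1 - p) * C / 2`
and `1 / (1 - p) + A * (1 - C / 2) = A`, where `C = survivalBound p`. -/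
noncomputable def decayBase (p : ℝ) : ℝ := 1 + survivalBound p * (1 - p) ^ 3 / 4

noncomputable def decayConst (p : ℝ) : ℝ := 2 / ((1 - p) * survivalBound p)

lemma survivalBound_pos : 0 < survivalBound p := exp_pos _

lemma survivalBound_le_one (hp0 : 0 ≤ p) : survivalBound p ≤ 1 :=
  exp_le_one_iff.2 (neg_nonpos.2 (by positivity))

lemma survivalBound_le_prod (hp0 : 0 ≤ p) (hp1 : p < 1) {l : ℤ} {F : Finset ℤ}
    (hF : ↑F ⊆ Ici l) : survivalBound p ≤ ∏ x ∈ F, (1 - p ^ ((x - l).toNat + 1)) := by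
  have hq : 0 < 1 - p := by linarith
  have hsum : ∑ x ∈ F, p ^ ((x - l).toNat + 1) ≤ p / (1 - p) := by
    simp only [pow_succ, ← Finset.sum_mul, div_eq_inv_mul]
    nlinarith [sum_pow_toNat_sub_le hp0 hp1 hF]
  calc survivalBound p ≤ exp (-((∑ x ∈ F, p ^ ((x - l).toNat + 1)) / (1 - p))) := by
        refine exp_le_exp.2 (neg_le_neg ?_)
        rw [pow_two, ← div_div]
        exact div_le_div_of_nonneg_right hsum hq.le
    _ = ∏ x ∈ F, exp (-(p ^ ((x - l).toNat + 1) / (1 - p))) := by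
        rw [← exp_sum, Finset.sum_div, ← Finset.sum_neg_distrib]
    _ ≤ ∏ x ∈ F, (1 - p ^ ((x - l).toNat + 1)) :=
        Finset.prod_le_prod (fun _ _ => (exp_pos _).le) fun _ _ =>
          exp_neg_div_one_sub_le_one_sub hp1 (by positivity)
            (pow_le_of_le_one hp0 hp1.le (by omega))

lemma one_lt_decayBase (hp1 : p < 1) : 1 < decayBase p := by
  have := survivalBound_pos (p := p)
  have : 0 < 1 - p := by linarith
  have : 0 < survivalBound p * (1 - p) ^ 3 / 4 := by positivity
  unfold decayBase
  linarith

lemma one_sub_div_two_le_one_sub_decayBase_mul (hp0 : 0 ≤ p) (hp1 : p < 1) :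
    (1 - p) / 2 ≤ 1 - decayBase p * p := by
  have hC1 := survivalBound_le_one hp0
  have hq : 0 < 1 - p := by linarith
  have hsmall : survivalBound p * (1 - p) ^ 2 * p ≤ 1 := by
    have : (1 - p) ^ 2 ≤ 1 := pow_le_one₀ hq.le (by linarith)
    calc survivalBound p * (1 - p) ^ 2 * p ≤ 1 * 1 * 1 := by gcongr
      _ = 1 := by norm_num
  unfold decayBase
  nlinarith

lemma sum_pow_mul_decayBase_pow_sub_one_le (hp0 : 0 ≤ p) (hp1 : p < 1) (I : Finset ℕ) :
    ∑ v ∈ I, p ^ v * (decayBase p ^ v - 1) ≤ (1 - p) * survivalBound p / 2 := by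
  set s := decayBase p
  have hC0 := survivalBound_pos (p := p)
  have hq : 0 < 1 - p := by linarith
  have hs1 : 1 < s := one_lt_decayBase hp1
  have hsp : (1 - p) / 2 ≤ 1 - s * p := one_sub_div_two_le_one_sub_decayBase_mul hp0 hp1
  have hsp0 : 0 ≤ s * p := mul_nonneg (by linarith) hp0
  have hsp1 : s * p < 1 := by linarith
  have hterm (v : ℕ) : p ^ v * (s ^ v - 1) = (s * p) ^ v - p ^ v := by ring
  have hgeom := summable_geometric_of_lt_one hsp0 hsp1
  have hgeom' := summable_geometric_of_lt_one hp0 hp1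
  calc ∑ v ∈ I, p ^ v * (s ^ v - 1) = ∑ v ∈ I, ((s * p) ^ v - p ^ v) := by simp only [hterm]
    _ ≤ ∑' v, ((s * p) ^ v - p ^ v) :=
        (hgeom.sub hgeom').sum_le_tsum _ fun v _ => by
          rw [← hterm]; exact mul_nonneg (pow_nonneg hp0 v) (sub_nonneg.2 (one_le_pow₀ hs1.le))
    _ = (s - 1) * p / ((1 - s * p) * (1 - p)) := by
        rw [hgeom.tsum_sub hgeom', tsum_geometric_of_lt_one hsp0 hsp1,
          tsum_geometric_of_lt_one hp0 hp1, inv_sub_inv (by linarith) hq.ne']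
        ring
    _ ≤ (1 - p) * survivalBound p / 2 := by
        rw [div_le_iff₀ (by positivity)]
        have hs : s - 1 = survivalBound p * (1 - p) ^ 3 / 4 := by simp only [s, decayBase]; ring
        rw [hs]
        have h1 := mul_le_mul_of_nonneg_left hsp
          (by positivity : (0 : ℝ) ≤ (1 - p) ^ 2 * survivalBound p)
        have h2 : survivalBound p * (1 - p) ^ 3 * p ≤ survivalBound p * (1 - p) ^ 3 :=
          mul_le_of_le_one_right (by positivity) hp1.le
        nlinarith

lemma sum_mul_decayBase_pow_le (hp0 : 0 ≤ p) (hp1 : p < 1) {I : Finset ℕ} {e : ℕ → ℝ}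
    (he : ∀ v ∈ I, e v ≤ p ^ v / (1 - p)) (hsum : ∑ v ∈ I, e v ≤ 1 - survivalBound p) :
    ∑ v ∈ I, e v * decayBase p ^ v ≤ 1 - survivalBound p / 2 := by
  have hq : 0 < 1 - p := by linarith
  calc ∑ v ∈ I, e v * decayBase p ^ v
      = ∑ v ∈ I, e v + ∑ v ∈ I, e v * (decayBase p ^ v - 1) := by
        rw [← Finset.sum_add_distrib]
        exact Finset.sum_congr rfl fun v _ => by ring
    _ ≤ (1 - survivalBound p) + ∑ v ∈ I, p ^ v * (decayBase p ^ v - 1) / (1 - p) := by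
        refine add_le_add hsum (Finset.sum_le_sum fun v hv => ?_)
        rw [mul_div_right_comm]
        exact mul_le_mul_of_nonneg_right (he v hv)
          (sub_nonneg.2 (one_le_pow₀ (one_lt_decayBase hp1).le))
    _ ≤ (1 - survivalBound p) + (1 - p) * survivalBound p / 2 / (1 - p) := by
        rw [← Finset.sum_div]
        gcongr
        exact sum_pow_mul_decayBase_pow_sub_one_le hp0 hp1 I
    _ = 1 - survivalBound p / 2 := by field_simp; ring

lemma inv_one_sub_add_decayConst_mul (hp1 : p < 1) :
    (1 - p)⁻¹ + decayConst p * (1 - survivalBound p / 2) = decayConst p := by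
  have hq : 1 - p ≠ 0 := by linarith
  have := (survivalBound_pos (p := p)).ne'
  unfold decayConst
  field_simp
  ring

end Constants

section Bounds

variable [MeasurableSpace Ω] {μ : Measure Ω} {p : ℝ}

lemma measureReal_reachesLE_le_of_le
    (htail : ∀ x (m : ℕ), μ.real (reachesLE S x (x - m)) ≤ p ^ m) {l x : ℤ} (hx : l ≤ x)
    (k : ℕ) : μ.real (reachesLE S x (l - k)) ≤ p ^ ((x - l).toNat + k) := by
  have h : l - k = x - ((x - l).toNat + k : ℕ) := by push_cast; omega
  rw [h]
  exact htail x _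

variable [IsProbabilityMeasure μ]

lemma IndepFrogs.measureReal_biInter_eq_prod (hS : IndepFrogs μ S) {E : ℤ → Set Ω}
    (hE : ∀ x, MeasurableSet[frogsSigma S {x}] (E x)) (F : Finset ℤ) :
    μ.real (⋂ x ∈ F, E x) = ∏ x ∈ F, μ.real (E x) := by
  classical
  induction F using Finset.induction_on with
  | empty => simp
  | insert a F ha ih =>
    rw [Finset.set_biInter_insert, Finset.prod_insert ha, ← ih]
    refine (hS.indep_frogsSigma (disjoint_singleton_left.2 ha)).measureReal_inter_eq_mul
      (hE a) (.biInter F.countable_toSet fun x hx => ?_)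
    exact frogsSigma_mono (singleton_subset_iff.2 hx) _ (hE x)

variable (hS : IndepFrogs μ S) (htail : ∀ x (m : ℕ), μ.real (reachesLE S x (x - m)) ≤ p ^ m)
  (hp0 : 0 ≤ p) (hp1 : p < 1)
include htail hp0 hp1

lemma measureReal_blockReachesLE_le {B : Set ℤ} {l : ℤ} (hB : B ⊆ Ici l) (k : ℕ) :
    μ.real (blockReachesLE S B (l - k)) ≤ p ^ k / (1 - p) := by
  refine measureReal_biUnion_le_of_forall_finset fun F hF => ?_
  calc μ.real (⋃ x ∈ F, reachesLE S x (l - k))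
      ≤ ∑ x ∈ F, μ.real (reachesLE S x (l - k)) := measureReal_biUnion_finset_le _ _
    _ ≤ ∑ x ∈ F, p ^ k * p ^ (x - l).toNat := Finset.sum_le_sum fun x hx =>
        (measureReal_reachesLE_le_of_le htail (hB (hF hx)) k).trans_eq (by ring)
    _ ≤ p ^ k * (1 - p)⁻¹ := by
        rw [← Finset.mul_sum]
        exact mul_le_mul_of_nonneg_left (sum_pow_toNat_sub_le hp0 hp1 (hF.trans hB))
          (pow_nonneg hp0 k)
    _ = p ^ k / (1 - p) := (div_eq_mul_inv _ _).symm

include hS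

lemma measureReal_blockReachesLE_sub_one_le {B : Set ℤ} {l : ℤ} (hB : B ⊆ Ici l) :
    μ.real (blockReachesLE S B (l - 1)) ≤ 1 - survivalBound p := by
  refine measureReal_biUnion_le_of_forall_finset fun F hF => ?_
  have hmeas (x : ℤ) : MeasurableSet[frogsSigma S {x}] (reachesLE S x (l - 1)) :=
    measurableSet_reachesLE hS.start (mem_singleton x) _
  have hsurvive : survivalBound p ≤ ∏ x ∈ F, μ.real (reachesLE S x (l - 1))ᶜ := by
    refine (survivalBound_le_prod hp0 hp1 (hF.trans hB)).trans
      (Finset.prod_le_prod (fun x _ => ?_) fun x hx => ?_)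
    · have : p ^ ((x - l).toNat + 1) ≤ 1 := pow_le_one₀ hp0 hp1.le
      linarith
    · rw [probReal_compl_eq_one_sub (frogsSigma_le hS.measurable _ _ (hmeas x))]
      have := measureReal_reachesLE_le_of_le htail (hB (hF hx)) 1
      push_cast at this
      linarith
  rw [← compl_compl (⋃ x ∈ F, _), compl_iUnion₂,
    probReal_compl_eq_one_sub (F.measurableSet_biInter fun x _ =>
      (frogsSigma_le hS.measurable _ _ (hmeas x)).compl),
    hS.measureReal_biInter_eq_prod fun x => (hmeas x).compl]
  linarith

lemma measureReal_cascade_le {B : Set ℤ} {l : ℤ} (hB : B ⊆ Ici l) (k : ℕ) :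
    μ.real (cascade S k l B) ≤ p ^ k / (1 - p) + ∑ v ∈ Finset.Ico 1 k,
      μ.real (blockMinEq S B (l - v)) * μ.real (cascade S (k - v) (l - v) (Ico (l - v) l)) := by
  rw [cascade_eq]
  refine (measureReal_union_le _ _).trans (add_le_add
    (measureReal_blockReachesLE_le htail hp0 hp1 hB k)
    ((measureReal_biUnion_finset_le _ _).trans_eq (Finset.sum_congr rfl fun v _ => ?_)))
  have hdisj : Disjoint B (Ico (l - v) l ∪ Iio (l - v)) := by
    refine disjoint_left.2 fun x hxB hx => ?_
    have := hB hxB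
    simp only [mem_Ici, mem_union, mem_Ico, mem_Iio] at this hx
    omega
  exact (hS.indep_frogsSigma hdisj).measureReal_inter_eq_mul
    (measurableSet_blockMinEq hS.start B _) (measurableSet_cascade hS.start _ _ _)

lemma sum_measureReal_blockMinEq_le {B : Set ℤ} {l : ℤ} (hB : B ⊆ Ici l) (k : ℕ) :
    ∑ v ∈ Finset.Ico 1 k, μ.real (blockMinEq S B (l - v)) ≤ 1 - survivalBound p := by
  rw [← measureReal_biUnion_finset (fun v _ w _ hvw => ?_) fun v _ =>
    frogsSigma_le hS.measurable _ _ (measurableSet_blockMinEq hS.start B _)]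
  · refine (measureReal_mono (iUnion₂_subset fun v hv => ?_)).trans
      (measureReal_blockReachesLE_sub_one_le hS htail hp0 hp1 hB)
    simp only [Finset.mem_Ico] at hv
    exact sdiff_subset.trans (blockReachesLE_mono (by omega))
  · rcases lt_or_gt_of_ne hvw with h | h
    · exact (disjoint_blockMinEq_of_lt (by omega)).symm
    · exact disjoint_blockMinEq_of_lt (by omega)

theorem measureReal_cascade_mul_pow_le (k : ℕ) (l : ℤ) (B : Set ℤ) (hB : B ⊆ Ici l) :
    μ.real (cascade S k l B) * decayBase p ^ k ≤ decayConst p := by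
  induction k using Nat.strong_induction_on generalizing l B with
  | _ k ih =>
  set s := decayBase p
  have hs1 : 1 ≤ s := (one_lt_decayBase hp1).le
  have hsp : s * p ≤ 1 := by linarith [one_sub_div_two_le_one_sub_decayBase_mul hp0 hp1]
  have hq : 0 < 1 - p := by linarith
  set e := fun v : ℕ => μ.real (blockMinEq S B (l - v))
  have hmass : ∑ v ∈ Finset.Ico 1 k, e v * s ^ v ≤ 1 - survivalBound p / 2 :=
    sum_mul_decayBase_pow_le hp0 hp1
      (fun v _ => (measureReal_mono sdiff_subset).trans
        (measureReal_blockReachesLE_le htail hp0 hp1 hB v))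
      (sum_measureReal_blockMinEq_le hS htail hp0 hp1 hB k)
  calc μ.real (cascade S k l B) * s ^ k
      ≤ (p ^ k / (1 - p) + ∑ v ∈ Finset.Ico 1 k,
          e v * μ.real (cascade S (k - v) (l - v) (Ico (l - v) l))) * s ^ k :=
        mul_le_mul_of_nonneg_right (measureReal_cascade_le hS htail hp0 hp1 hB k) (by positivity)
    _ = (s * p) ^ k / (1 - p) + ∑ v ∈ Finset.Ico 1 k,
          e v * s ^ v * (μ.real (cascade S (k - v) (l - v) (Ico (l - v) l)) * s ^ (k - v)) := by
        rw [add_mul, Finset.sum_mul, mul_pow]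
        congr 1
        · ring
        · refine Finset.sum_congr rfl fun v hv => ?_
          have hk : s ^ k = s ^ v * s ^ (k - v) := by
            rw [← pow_add, Nat.add_sub_of_le (Finset.mem_Ico.1 hv).2.le]
          rw [hk]
          ring
    _ ≤ (1 - p)⁻¹ + ∑ v ∈ Finset.Ico 1 k, e v * s ^ v * decayConst p := by
        gcongr with v hv
        · rw [← one_div]
          exact div_le_div_of_nonneg_right (pow_le_one₀ (by positivity) hsp) hq.le
        · exact ih (k - v) (by simp at hv; omega) _ _ fun x hx => hx.1
    _ ≤ (1 - p)⁻¹ + decayConst p * (1 - survivalBound p / 2) := by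
        rw [← Finset.sum_mul, mul_comm]
        have := survivalBound_pos (p := p)
        have : 0 ≤ decayConst p := by unfold decayConst; positivity
        gcongr
    _ = decayConst p := inv_one_sub_add_decayConst_mul hp1

end Bounds

section Reach

variable {ω : Ω}

lemma le_of_reflTransGen {l u : ℤ} (hl : l ≤ 0) (hsafe : ∀ x, l ≤ x → ∀ m, l ≤ S x m ω)
    (h : Relation.ReflTransGen (fun u v => ∃ m, S u m ω = v) 0 u) : l ≤ u := by
  induction h with
  | refl => exact hl
  | tail _ hstep ih => obtain ⟨m, rfl⟩ := hstep; exact hsafe _ ih m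

lemma exists_mem_blockMinEq {B : Set ℤ} {l : ℤ} {k : ℕ}
    (hnear : ω ∈ blockReachesLE S B (l - 1)) (hfar : ω ∉ blockReachesLE S B (l - k)) :
    ∃ v ∈ Finset.Ico 1 k, ω ∈ blockMinEq S B (l - v) := by
  classical
  obtain ⟨b, hb, hleast⟩ := Int.exists_least_of_bdd (P := fun c => ω ∈ blockReachesLE S B c)
    ⟨l - k + 1, fun c hc => by
      by_contra h
      exact hfar (blockReachesLE_mono (by omega) hc)⟩ ⟨l - 1, hnear⟩
  have hbl : b ≤ l - 1 := hleast _ hnear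
  have hbk : l - k < b := by
    by_contra h
    exact hfar (blockReachesLE_mono (by omega) hb)
  refine ⟨(l - b).toNat, Finset.mem_Ico.2 ⟨by omega, by omega⟩, ?_⟩
  rw [show l - ((l - b).toNat : ℤ) = b by omega]
  exact ⟨hb, fun h => by have := hleast _ h; omega⟩

/-- The frogs started in `[l, ∞) \ B` are those explored before the record `l` was set, so they
never go below `l`. -/
theorem mem_cascade_of_reflTransGen {k : ℕ} (hk : 1 ≤ k) {l : ℤ} (hl : l ≤ 0) {B : Set ℤ}
    (hB : B ⊆ Ici l) (hexplored : ∀ x, l ≤ x → x ∉ B → ∀ m, l ≤ S x m ω)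
    (hreach : Relation.ReflTransGen (fun u v => ∃ m, S u m ω = v) 0 (l - k)) :
    ω ∈ cascade S k l B := by
  induction k using Nat.strong_induction_on generalizing l B with
  | _ k ih =>
  rw [cascade_eq]
  by_cases hfar : ω ∈ blockReachesLE S B (l - k)
  · exact Or.inl hfar
  have hnear : ω ∈ blockReachesLE S B (l - 1) := by
    by_contra hnear
    have := le_of_reflTransGen hl (fun x hx m => ?_) hreach
    · omega
    by_cases hxB : x ∈ B
    · by_contra h
      exact hnear (mem_biUnion hxB ⟨m, by omega⟩)
    · exact hexplored x hx hxB m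
  obtain ⟨v, hv, hmin⟩ := exists_mem_blockMinEq hnear hfar
  refine Or.inr (mem_iUnion₂.2 ⟨v, hv, hmin, ?_⟩)
  rw [Finset.mem_Ico] at hv
  refine ih (k - v) (by omega) (by omega) (by omega) (fun x hx => hx.1) (fun x hx hxB m => ?_) ?_
  · by_cases hxB' : x ∈ B
    · by_contra h
      exact hmin.2 (mem_biUnion hxB' ⟨m, by omega⟩)
    · have hlx : l ≤ x := by
        simp only [mem_Ico, not_and, not_lt] at hxB
        exact hxB hx
      have := hexplored x hlx hxB' m
      omega
  · convert hreach using 1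
    omega

end Reach

lemma measureReal_reachesLE_le [MeasurableSpace Ω] {μ : Measure Ω} [IsProbabilityMeasure μ]
    (hS : IndepFrogs μ S) {α : ℝ} (hα0 : 0 < α) (hα1 : α ≤ 1)
    (hup : ∀ x n, μ {ω | S x (n + 1) ω - S x n ω = 1} = ENNReal.ofReal ((1 + α) / 2))
    (hdown : ∀ x n, μ {ω | S x (n + 1) ω - S x n ω = -1} = ENNReal.ofReal ((1 - α) / 2))
    (x : ℤ) (m : ℕ) : μ.real (reachesLE S x (x - m)) ≤ ((1 - α) / (1 + α)) ^ m := by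
  have hevent : reachesLE S x (x - m) =
      {ω | ∃ t, ∑ i ∈ Finset.range t, increment S (x, i) ω ≤ -m} := by
    ext ω
    simp only [reachesLE, mem_ofPred_eq, eq_add_sum_increment hS.start x]
    exact exists_congr fun t => by omega
  have hratio : (1 - α) / 2 / ((1 + α) / 2) = (1 - α) / (1 + α) := by field_simp
  rw [hevent, ← hratio]
  refine measureReal_exists_sum_le_neg_le (by linarith) (by ring) _
    (fun i => (hS.measurable x (i + 1)).sub (hS.measurable x i))
    (hS.iIndepFun_increment.precomp (Prod.mk_right_injective x)) (fun i => ?_) (fun i => ?_) m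
  · simp only [Pi.sub_apply, measureReal_def, hup x i,
      ENNReal.toReal_ofReal (by linarith : (0 : ℝ) ≤ (1 + α) / 2)]
  · simp only [Pi.sub_apply, measureReal_def, hdown x i,
      ENNReal.toReal_ofReal (by linarith : (0 : ℝ) ≤ (1 - α) / 2)]

end FrogModel

open FrogModel in
/-- In the frog model on ℤ with drift α > 0 (each frog steps +1 with probability
(1+α)/2 and -1 with probability (1-α)/2, one sleeping frog at each nonzero site,
one active frog at 0), the probability that site -n is ever visited by an active
frog decays exponentially in n. -/
theorem stmt7 {Ω : Type*} [MeasurableSpace Ω] (μ : Measure Ω) [IsProbabilityMeasure μ]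
    (α : ℝ) (hα0 : 0 < α) (hα1 : α ≤ 1)
    (S : ℤ → ℕ → Ω → ℤ)  -- trajectory of the frog initially at x
    (hmeas : ∀ x n, Measurable (S x n))
    (hstart : ∀ x ω, S x 0 ω = x)
    (hindep : ProbabilityTheory.iIndepFun
      (fun (p : ℤ × ℕ) (ω : Ω) => S p.1 (p.2 + 1) ω - S p.1 p.2 ω) μ)
    (hup : ∀ x n, μ {ω | S x (n + 1) ω - S x n ω = 1} = ENNReal.ofReal ((1 + α) / 2))
    (hdown : ∀ x n, μ {ω | S x (n + 1) ω - S x n ω = -1} = ENNReal.ofReal ((1 - α) / 2)) :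
    ∃ c > (0 : ℝ), ∀ n : ℕ, 1 ≤ n →
      μ {ω | Relation.ReflTransGen (fun u v : ℤ => ∃ m : ℕ, S u m ω = v) 0 (-(n : ℤ))} ≤
        ENNReal.ofReal (Real.exp (-c * n)) := by
  set p := (1 - α) / (1 + α)
  have hp0 : 0 ≤ p := div_nonneg (by linarith) (by linarith)
  have hp1 : p < 1 := (div_lt_one (by linarith)).2 (by linarith)
  have hS : IndepFrogs μ S := ⟨hmeas, hstart, hindep⟩
  have htail := measureReal_reachesLE_le hS hα0 hα1 hup hdown
  set visits := fun n : ℕ =>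
    {ω | Relation.ReflTransGen (fun u v : ℤ => ∃ m : ℕ, S u m ω = v) 0 (-(n : ℤ))}
  have hcascade (n : ℕ) (hn : 1 ≤ n) : visits n ⊆ cascade S n 0 (Ici 0) := fun ω hω =>
    mem_cascade_of_reflTransGen hn le_rfl subset_rfl (fun _ hx hxB => absurd hx hxB)
      (by rwa [zero_sub])
  obtain ⟨c, hc, hdecay⟩ := exists_pos_forall_le_exp_neg_mul (a := fun n => μ.real (visits n))
    (by linarith [survivalBound_pos (p := p)]) (one_lt_decayBase hp1)
    (fun n hn => (measureReal_mono ((hcascade n hn).trans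
      (cascade_subset_blockReachesLE hn 0 _))).trans
        (measureReal_blockReachesLE_sub_one_le hS htail hp0 hp1 subset_rfl))
    (fun n hn => (mul_le_mul_of_nonneg_right (measureReal_mono (hcascade n hn))
      (pow_nonneg (zero_le_one.trans (one_lt_decayBase hp1).le) n)).trans
        (measureReal_cascade_mul_pow_le hS htail hp0 hp1 n 0 _ subset_rfl))
  refine ⟨c, hc, fun n hn => ?_⟩
  rw [← ofReal_measureReal]
  exact ENNReal.ofReal_le_ofReal (hdecay n hn)
end

section
/- Fix $d \geq 1$, $k \in \mathbb{Z}$, and weight $w \in (0,1]$. For a random walk on $\mathbb{Z}^d$ with transition probabilities $\pi_{w,\alpha}$, let $T_k$ be the entrance time of the hyperplane $H_k = \{x : x_1 = k\}$ and $T_k'$ the last visit time to $H_k$. On the event $\{T_k < \infty\}$, the number of distinct vertices of $H_k \setminus L_0$ visited by the walk is at most $\mathbf{1}\{\text{at least one step in a non-}e_1\text{ direction occurred before } T_k\}$ plus the number of non-$e_1$ steps taken in the time interval $(T_k, T_k']$, where $L_0 = \{y : y_i = 0 \text{ for } 2 \leq i \leq d\}$. -/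
/-!
A vertex of `H_k` is determined by its transverse part (all coordinates but the first), and the
transverse part of the walk changes exactly at the non-`e₁` steps. Every visit to `H_k` happens in
`[T_k, T_k']`, and along a time interval a sequence takes at most as many values besides its
initial one as it has jumps. Vertices off `L₀` differ transversally from the start `0`: if the walk
enters `H_k` on `L₀`, the jumps in `[T_k, T_k')` bound their number; otherwise the one extra value
is paid for by a jump before `T_k`.
-/

open Set

section JumpTimes

variable {β : Type*}

def jumpTimes (g : ℕ → β) (a b : ℕ) : Set ℕ := {j ∈ Ico a b | g (j + 1) ≠ g j}

variable (g : ℕ → β)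

theorem finite_jumpTimes (a b : ℕ) : (jumpTimes g a b).Finite :=
  (finite_Ico a b).subset fun _ hj => hj.1

theorem jumpTimes_subset_succ (a b : ℕ) : jumpTimes g a b ⊆ jumpTimes g a (b + 1) :=
  fun _ ⟨hj, hjump⟩ => ⟨⟨hj.1, hj.2.trans (Nat.lt_succ_self b)⟩, hjump⟩

theorem jumpTimes_succ_of_ne {a b : ℕ} (hab : a ≤ b) (h : g (b + 1) ≠ g b) :
    jumpTimes g a (b + 1) = insert b (jumpTimes g a b) := by
  ext j
  simp only [jumpTimes, mem_ofPred_eq, mem_Ico, mem_insert_iff]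
  constructor
  · rintro ⟨⟨haj, hjb⟩, hjump⟩
    rcases Nat.lt_succ_iff_lt_or_eq.mp hjb with hjb | rfl
    exacts [Or.inr ⟨⟨haj, hjb⟩, hjump⟩, Or.inl rfl]
  · rintro (rfl | ⟨⟨haj, hjb⟩, hjump⟩)
    exacts [⟨⟨hab, Nat.lt_succ_self j⟩, h⟩, ⟨⟨haj, hjb.trans (Nat.lt_succ_self b)⟩, hjump⟩]

theorem nonempty_jumpTimes_of_ne {a b : ℕ} (hab : a ≤ b) (h : g b ≠ g a) :
    (jumpTimes g a b).Nonempty := by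
  induction b, hab using Nat.le_induction with
  | base => exact absurd rfl h
  | succ b hab ih =>
    by_cases hjump : g (b + 1) = g b
    · exact (ih (hjump ▸ h)).mono (jumpTimes_subset_succ g a b)
    · exact ⟨b, by rw [jumpTimes_succ_of_ne g hab hjump]; exact mem_insert b _⟩

theorem image_Icc_succ {a b : ℕ} (hab : a ≤ b) :
    g '' Icc a (b + 1) = insert (g (b + 1)) (g '' Icc a b) := by
  rw [← image_insert_eq]
  exact congrArg _ (Order.Icc_succ_right (hab.trans (Nat.le_succ b)))

theorem ncard_image_Icc_sdiff_le_ncard_jumpTimes (a b : ℕ) :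
    (g '' Icc a b \ {g a}).ncard ≤ (jumpTimes g a b).ncard := by
  rcases lt_or_ge b a with hba | hab
  · simp [Icc_eq_empty_of_lt hba]
  induction b, hab using Nat.le_induction with
  | base => simp
  | succ b hab ih =>
    have hfin : (g '' Icc a b \ {g a}).Finite := ((finite_Icc a b).image g).sdiff
    by_cases hjump : g (b + 1) = g b
    · have hsame : g '' Icc a (b + 1) = g '' Icc a b := by
        rw [image_Icc_succ g hab, hjump]
        exact insert_eq_of_mem (mem_image_of_mem g ⟨hab, le_rfl⟩)
      rw [hsame]
      exact ih.trans (ncard_le_ncard (jumpTimes_subset_succ g a b) (finite_jumpTimes g _ _))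
    · have hsub : g '' Icc a (b + 1) \ {g a} ⊆ insert (g (b + 1)) (g '' Icc a b \ {g a}) := by
        rintro x ⟨hx, hxa⟩
        rw [image_Icc_succ g hab] at hx
        rcases hx with rfl | hx
        exacts [mem_insert _ _, mem_insert_of_mem _ ⟨hx, hxa⟩]
      calc (g '' Icc a (b + 1) \ {g a}).ncard
          ≤ (insert (g (b + 1)) (g '' Icc a b \ {g a})).ncard := ncard_le_ncard hsub (hfin.insert _)
        _ ≤ (g '' Icc a b \ {g a}).ncard + 1 := ncard_insert_le _ _
        _ ≤ (jumpTimes g a b).ncard + 1 := Nat.add_le_add_right ih 1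
        _ = (jumpTimes g a (b + 1)).ncard := by
          rw [jumpTimes_succ_of_ne g hab hjump,
            ncard_insert_of_notMem (fun hb => hb.1.2.false) (finite_jumpTimes g a b)]

theorem ncard_image_Icc_sdiff_apply_zero_le (a b : ℕ) :
    (g '' Icc a b \ {g 0}).ncard ≤ min 1 (jumpTimes g 0 a).ncard + (jumpTimes g a b).ncard := by
  by_cases ha : g a = g 0
  · rw [← ha]
    exact (ncard_image_Icc_sdiff_le_ncard_jumpTimes g a b).trans (Nat.le_add_left _ _)
  · have hbefore : 1 ≤ (jumpTimes g 0 a).ncard :=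
      (ncard_pos (finite_jumpTimes g 0 a)).mpr (nonempty_jumpTimes_of_ne g a.zero_le ha)
    have hfin : (g '' Icc a b).Finite := (finite_Icc a b).image g
    calc (g '' Icc a b \ {g 0}).ncard
        ≤ (insert (g a) (g '' Icc a b \ {g a})).ncard :=
          ncard_le_ncard
            (sdiff_subset.trans (by rw [insert_sdiff_singleton]; exact subset_insert _ _))
            (hfin.sdiff.insert _)
      _ ≤ (g '' Icc a b \ {g a}).ncard + 1 := ncard_insert_le _ _
      _ ≤ (jumpTimes g a b).ncard + 1 :=
          Nat.add_le_add_right (ncard_image_Icc_sdiff_le_ncard_jumpTimes g a b) 1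
      _ = min 1 (jumpTimes g 0 a).ncard + (jumpTimes g a b).ncard := by
          rw [min_eq_left hbefore, add_comm]

end JumpTimes

theorem injOn_domRestrict_compl_singleton {ι α : Type*} (i : ι) (c : α) :
    InjOn (fun x : ι → α => ({i}ᶜ : Set ι).domRestrict x) {x | x i = c} := by
  intro x hx y hy h
  funext j
  by_cases hj : j = i
  · rw [hj, mem_ofPred_eq.mp hx, mem_ofPred_eq.mp hy]
  · exact domRestrict_eq_domRestrict_iff.mp h (mem_compl_singleton_iff.mpr hj)

theorem stmt8_general (d : ℕ) (hd : 0 < d) (k : ℤ) (S : ℕ → Fin d → ℤ)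
    (h0 : S 0 = fun _ => 0)
    (hfin : {n : ℕ | S n ⟨0, hd⟩ = k}.Finite) :
    -- entrance time and last visit time of the hyperplane H_k
    letI Tk : ℕ := sInf {n : ℕ | S n ⟨0, hd⟩ = k}
    letI Tk' : ℕ := sSup {n : ℕ | S n ⟨0, hd⟩ = k}
    -- the step between times j and j+1 is in a non-e₁ direction
    letI nonE1 : ℕ → Prop := fun j => ∃ i : Fin d, i ≠ ⟨0, hd⟩ ∧ S (j + 1) i ≠ S j i
    -- visited vertices of H_k \ L₀
    ({x : Fin d → ℤ | (∃ n, S n = x) ∧ x ⟨0, hd⟩ = k ∧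
        ¬(∀ i : Fin d, i ≠ ⟨0, hd⟩ → x i = 0)}).ncard ≤
      min 1 ({m : ℕ | m < Tk ∧ nonE1 m}.ncard) +
        ({j : ℕ | Tk ≤ j ∧ j < Tk' ∧ nonE1 j}).ncard := by
  beta_reduce
  set i0 : Fin d := ⟨0, hd⟩
  set Tk := sInf {n : ℕ | S n i0 = k}
  set Tk' := sSup {n : ℕ | S n i0 = k}
  let transverse : (Fin d → ℤ) → ({i0}ᶜ : Set (Fin d)) → ℤ := fun x =>
    ({i0}ᶜ : Set _).domRestrict x
  have htransverse : ∀ x y, transverse x = transverse y ↔ ∀ i ≠ i0, x i = y i := fun x y =>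
    domRestrict_eq_domRestrict_iff.trans (forall_congr' fun _ => by rw [mem_compl_singleton_iff])
  have hjump : ∀ a b, jumpTimes (transverse ∘ S) a b =
      {j | a ≤ j ∧ j < b ∧ ∃ i, i ≠ i0 ∧ S (j + 1) i ≠ S j i} := by
    intro a b
    ext j
    simp only [jumpTimes, Function.comp_apply, ne_eq, htransverse, mem_Ico, mem_ofPred_eq,
      and_assoc, not_forall, exists_prop]
  have hvisit : ∀ n, S n i0 = k → n ∈ Icc Tk Tk' := fun n hn =>
    ⟨Nat.sInf_le hn, le_csSup hfin.bddAbove hn⟩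
  calc _ ≤ ((transverse ∘ S) '' Icc Tk Tk' \ {(transverse ∘ S) 0}).ncard := by
        refine ncard_le_ncard_of_injOn transverse ?_
          ((injOn_domRestrict_compl_singleton i0 k).mono fun x hx => hx.2.1)
          ((finite_Icc _ _).image _).sdiff
        rintro x ⟨⟨n, rfl⟩, hk, hoff⟩
        refine ⟨⟨n, hvisit n hk, rfl⟩, fun h => hoff fun i hi => ?_⟩
        rw [(htransverse _ _).mp h i hi, h0]
    _ ≤ _ := ncard_image_Icc_sdiff_apply_zero_le _ _ _
    _ = _ := by simp only [hjump, zero_le, true_and]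

/-- Pathwise bound: for a nearest-neighbour trajectory in `ℤ^d` started at 0 that
visits the hyperplane `H_k = {x : x₁ = k}` at least once and finitely often, the
number of distinct vertices of `H_k \ L₀` visited (where `L₀` is the first
coordinate axis) is at most the indicator that some non-`e₁` step occurred before
the entrance time `T_k`, plus the number of non-`e₁` steps in the interval
`(T_k, T_k']`, where `T_k'` is the last visit time to `H_k`. -/
theorem stmt8 (d : ℕ) (hd : 0 < d) (k : ℤ) (S : ℕ → Fin d → ℤ)
    (h0 : S 0 = fun _ => 0)
    (hstep : ∀ n, (∑ i, (S (n + 1) i - S n i).natAbs) = 1)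
    (hne : {n : ℕ | S n ⟨0, hd⟩ = k}.Nonempty)
    (hfin : {n : ℕ | S n ⟨0, hd⟩ = k}.Finite) :
    -- entrance time and last visit time of the hyperplane H_k
    letI Tk : ℕ := sInf {n : ℕ | S n ⟨0, hd⟩ = k}
    letI Tk' : ℕ := sSup {n : ℕ | S n ⟨0, hd⟩ = k}
    -- the step between times j and j+1 is in a non-e₁ direction
    letI nonE1 : ℕ → Prop := fun j => ∃ i : Fin d, i ≠ ⟨0, hd⟩ ∧ S (j + 1) i ≠ S j i
    -- visited vertices of H_k \ L₀
    ({x : Fin d → ℤ | (∃ n, S n = x) ∧ x ⟨0, hd⟩ = k ∧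
        ¬(∀ i : Fin d, i ≠ ⟨0, hd⟩ → x i = 0)}).ncard ≤
      min 1 ({m : ℕ | m < Tk ∧ nonE1 m}.ncard) +
        ({j : ℕ | Tk ≤ j ∧ j < Tk' ∧ nonE1 j}).ncard :=
  stmt8_general d hd k S h0 hfin
end
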